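/- Let 0 < β < 1, ε > 0 and let g(x) = ((1-α)Σ_{k∈-ℕ₀} α^{-k} x_k)/(ε + √((1-β)Σ_{k∈-ℕ₀} β^{-k} x_k²)) on ℓ_ϱ (with 0 ≤ α < √β). For n ≥ 1, let σ_n m_n denote the Adam update with bias correction, i.e. σ_n m_n = ((1-α)Σ_{k≤0} α^{-k} X_{n+k})/(ε + √((1-β)/(1-β^n) Σ_{k≤0} β^{-k} X_{n+k}²)). Then |σ_n m_n − g(X(n))| ≤ 2β^n ‖X(n)‖_{ℓ_ϱ}, where X(n) = (X_{n+k})_{k∈-ℕ₀}. -/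

import Mathlib

/-!
Bias correction divides the square root in the denominator of `g` by `s = √(1 - βⁿ)`.
Enlarging a denominator `ε + u` to `ε + u / s` with `0 < s ≤ 1` changes `A / (ε + u)` by at most
`(1 - s) |A| / ε`, and `1 - √(1 - βⁿ) ≤ βⁿ`. Finally `|A| / ε ≤ ‖X(n)‖_{ℓ_ϱ}`, because the
weights `(1 - α) αʲ / ε` of the numerator are dominated by `ϱ j`; this even gives the bound
with `βⁿ` in place of `2 βⁿ`.
-/

open scoped ENNReal

/-- The map `g` from the Adam sequence space to `ℝ` (scalar case, index `j : ℕ`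
corresponding to the nonpositive integer `-j`); `g x = 0` if the denominator diverges. -/
noncomputable def adamG (α β ε : ℝ) (x : ℕ → ℝ) : ℝ :=
  if (∑' j : ℕ, ENNReal.ofReal ((1 - β) * β ^ j * (x j) ^ 2)) = ∞ then 0
  else ((1 - α) * ∑' j : ℕ, α ^ j * x j) /
    (ε + Real.sqrt (∑' j : ℕ, ENNReal.ofReal ((1 - β) * β ^ j * (x j) ^ 2)).toReal)

lemma adamG_eq_of_summable {α β ε : ℝ} (hβ₀ : 0 ≤ β) (hβ₁ : β ≤ 1) {x : ℕ → ℝ}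
    (hx : Summable fun j => β ^ j * x j ^ 2) :
    adamG α β ε x = ((1 - α) * ∑' j, α ^ j * x j) /
      (ε + Real.sqrt ((1 - β) * ∑' j, β ^ j * x j ^ 2)) := by
  have h_nonneg : ∀ j, 0 ≤ (1 - β) * (β ^ j * x j ^ 2) := fun j =>
    mul_nonneg (sub_nonneg.2 hβ₁) (by positivity)
  have h_tsum : ∑' j, ENNReal.ofReal ((1 - β) * β ^ j * x j ^ 2)
      = ENNReal.ofReal ((1 - β) * ∑' j, β ^ j * x j ^ 2) := by
    simp only [mul_assoc]
    rw [← ENNReal.ofReal_tsum_of_nonneg h_nonneg (hx.mul_left (1 - β)), tsum_mul_left]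
  rw [adamG, h_tsum, if_neg ENNReal.ofReal_ne_top,
    ENNReal.toReal_ofReal (tsum_mul_left (a := 1 - β) ▸ tsum_nonneg h_nonneg)]

lemma abs_div_add_div_sub_div_add_le {A ε u s : ℝ} (hε : 0 < ε) (hu : 0 ≤ u)
    (hs₀ : 0 < s) (hs₁ : s ≤ 1) :
    |A / (ε + u / s) - A / (ε + u)| ≤ (1 - s) * (|A| / ε) := by
  have hsu : 0 < s * ε + u := by positivity
  have key : A / (ε + u / s) - A / (ε + u) = -(A * (1 - s)) * (u / ((s * ε + u) * (ε + u))) := by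
    field_simp
    ring
  have hfrac : u / ((s * ε + u) * (ε + u)) ≤ 1 / ε := by
    rw [div_le_div_iff₀ (by positivity) hε]
    nlinarith [mul_nonneg hs₀.le hε.le, mul_nonneg hu hε.le]
  rw [key, abs_mul, abs_neg, abs_mul, abs_of_nonneg (sub_nonneg.2 hs₁),
    abs_of_nonneg (by positivity : 0 ≤ u / ((s * ε + u) * (ε + u)))]
  calc |A| * (1 - s) * (u / ((s * ε + u) * (ε + u))) ≤ |A| * (1 - s) * (1 / ε) := by
        gcongr
    _ = (1 - s) * (|A| / ε) := by ring

lemma one_sub_sqrt_one_sub_le {t : ℝ} (ht₀ : 0 ≤ t) (ht₁ : t ≤ 1) : 1 - Real.sqrt (1 - t) ≤ t := by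
  have : 1 - t ≤ Real.sqrt (1 - t) :=
    Real.le_sqrt_of_sq_le (by nlinarith)
  linarith

lemma abs_tsum_mul_le_tsum_mul_abs {w ϱ x : ℕ → ℝ} (hw : ∀ j, 0 ≤ w j) (hwϱ : ∀ j, w j ≤ ϱ j)
    (hϱx : Summable fun j => ϱ j * |x j|) :
    |∑' j, w j * x j| ≤ ∑' j, ϱ j * |x j| := by
  have hle : ∀ j, ‖w j * x j‖ ≤ ϱ j * |x j| := fun j => by
    rw [Real.norm_eq_abs, abs_mul, abs_of_nonneg (hw j)]
    exact mul_le_mul_of_nonneg_right (hwϱ j) (abs_nonneg _)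
  have hsum : Summable fun j => ‖w j * x j‖ :=
    Summable.of_nonneg_of_le (fun _ => norm_nonneg _) hle hϱx
  exact (norm_tsum_le_tsum_norm hsum).trans (hsum.tsum_le_tsum hle hϱx)

lemma abs_mul_tsum_geometric_div_le {α ε : ℝ} {ϱ x : ℕ → ℝ} (hα₀ : 0 ≤ α) (hα₁ : α ≤ 1)
    (hε : 0 < ε) (hϱ : ∀ j, (1 - α) * ε⁻¹ * α ^ j ≤ ϱ j)
    (hϱx : Summable fun j => ϱ j * |x j|) :
    |(1 - α) * ∑' j, α ^ j * x j| / ε ≤ ∑' j, ϱ j * |x j| := by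
  have hα : 0 ≤ 1 - α := sub_nonneg.2 hα₁
  have h_eq : (1 - α) * (∑' j, α ^ j * x j) / ε = ∑' j, (1 - α) * ε⁻¹ * α ^ j * x j := by
    simp only [mul_assoc, tsum_mul_left]
    field_simp
  rw [← abs_of_pos hε, ← abs_div, h_eq]
  exact abs_tsum_mul_le_tsum_mul_abs (fun j => by positivity) hϱ hϱx

/-- the bias-corrected Adam update `σ_n m_n` differs from `g(X(n))`,
where `X(n) = (X_{n+k})_{k∈-ℕ₀}` (here `fun j : ℕ => X (n - j)`), by at most
`2 β^n ‖X(n)‖_{ℓ_ϱ}`. -/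
theorem stmt14_bias_correction_error (α β ε : ℝ) (hα : 0 ≤ α) (hαβ : α < Real.sqrt β)
    (hβ : Real.sqrt β < 1) (hε : 0 < ε)
    (ϱ : ℕ → ℝ)
    (hϱ : ∀ k : ℕ, ϱ k = (1 - α) * ε⁻¹ * (α ^ k + (1 / Real.sqrt (1 - α ^ 2 / β)) * (Real.sqrt β) ^ k))
    (X : ℤ → ℝ) (n : ℕ) (hn : 1 ≤ n)
    (hℓϱ : Summable fun j : ℕ => ϱ j * |X ((n : ℤ) - j)|)
    (hsum_v : Summable fun j : ℕ => β ^ j * (X ((n : ℤ) - j)) ^ 2)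
    (σm : ℝ)
    (hσm : σm = ((1 - α) * ∑' j : ℕ, α ^ j * X ((n : ℤ) - j)) /
      (ε + Real.sqrt ((1 - β) / (1 - β ^ n) * ∑' j : ℕ, β ^ j * (X ((n : ℤ) - j)) ^ 2))) :
    |σm - adamG α β ε (fun j : ℕ => X ((n : ℤ) - j))|
      ≤ 2 * β ^ n * ∑' j : ℕ, ϱ j * |X ((n : ℤ) - j)| := by
  set x : ℕ → ℝ := fun j => X ((n : ℤ) - j)
  set A := (1 - α) * ∑' j, α ^ j * x j
  set N := ∑' j, ϱ j * |x j|
  have hβ₀ : 0 < β := Real.sqrt_pos.1 (hα.trans_lt hαβ)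
  have hβ₁ : β < 1 := lt_of_not_ge fun h => hβ.not_ge (Real.one_le_sqrt.2 h)
  have hα₁ : 0 ≤ 1 - α := sub_nonneg.2 (hαβ.trans hβ).le
  have hβn₀ : 0 ≤ β ^ n := by positivity
  have hβn₁ : β ^ n < 1 := pow_lt_one₀ hβ₀.le hβ₁ (by omega)
  have hweight : ∀ j, (1 - α) * ε⁻¹ * α ^ j ≤ ϱ j := fun j => by
    rw [hϱ j, mul_add]
    exact le_add_of_nonneg_right (mul_nonneg (mul_nonneg hα₁ (by positivity)) (by positivity))
  have hnum : |A| / ε ≤ N :=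
    abs_mul_tsum_geometric_div_le hα (by linarith) hε hweight hℓϱ
  have hdenom : Real.sqrt ((1 - β) / (1 - β ^ n) * ∑' j, β ^ j * x j ^ 2)
      = Real.sqrt ((1 - β) * ∑' j, β ^ j * x j ^ 2) / Real.sqrt (1 - β ^ n) := by
    rw [div_mul_eq_mul_div, Real.sqrt_div
      (mul_nonneg (sub_nonneg.2 hβ₁.le) (tsum_nonneg fun j => by positivity))]
  rw [hσm, adamG_eq_of_summable hβ₀.le hβ₁.le hsum_v, hdenom]
  calc _ ≤ (1 - Real.sqrt (1 - β ^ n)) * (|A| / ε) :=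
        abs_div_add_div_sub_div_add_le hε (Real.sqrt_nonneg _)
          (Real.sqrt_pos.2 (sub_pos.2 hβn₁)) (Real.sqrt_le_one.2 (by linarith))
    _ ≤ β ^ n * N := mul_le_mul (one_sub_sqrt_one_sub_le hβn₀ hβn₁.le) hnum
        (by positivity) hβn₀
    _ ≤ 2 * β ^ n * N := by nlinarith [(div_nonneg (abs_nonneg A) hε.le).trans hnum]
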